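/- arXiv:1803.01414 — 3 statements merged into one kernel-verified Lean document; each statement's English description precedes it below -/
import Mathlib

section
/- For every formal power series f over the integers with zero constant term and with the coefficient of q equal to 1, there exists a sequence of integers (g_n)_{n≥1} such that f = q·∏_{n=1}^∞ (1−q^n)^{g_n}, i.e., for every N ≥ 1 one has f ≡ q·∏_{n=1}^N (1−q^n)^{g_n} (mod q^{N+2}). -/
open PowerSeries Finset

/-!
Write `f = X * h` with `h(0) = 1`. For every integer `g`, `(1 - X ^ n) ^ g ≡ 1 - g X ^ n`
modulo `X ^ (n + 1)`, so multiplying a partial product `P ≡ h (mod X ^ n)`, `P(0) = 1`, by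
`(1 - X ^ n) ^ g` lowers its coefficient of `X ^ n` by `g` and leaves the lower ones alone.
Hence the exponents can be chosen one after the other, and they are integers because the
coefficients of `h` are.
-/

theorem sq_dvd_val_zpow_sub {A : Type*} [CommRing A] {x : A} {u : Aˣ} (hu : (u : A) = 1 + x)
    (g : ℤ) : x ^ 2 ∣ ((u ^ g : Aˣ) : A) - (1 + g * x) := by
  have hnat (k : ℕ) : x ^ 2 ∣ (u : A) ^ k - (1 + k * x) := by
    convert sq_dvd_add_pow_sub_sub x 1 k using 1
    rw [hu]
    ring
  obtain ⟨k, rfl | rfl⟩ := Int.eq_nat_or_neg g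
  · simpa using hnat k
  · -- `v` inverts `u ^ k ≡ 1 + k x`, so `v ≡ 1 - k x` modulo `x ^ 2`.
    set v : A := ((u ^ (-(k : ℤ)) : Aˣ) : A)
    have hv : v * (u : A) ^ k = 1 := by
      rw [← Units.val_pow_eq_pow_val, ← Units.val_mul, ← zpow_natCast, ← zpow_add,
        neg_add_cancel, zpow_zero, Units.val_one]
    obtain ⟨a, ha⟩ := hnat k
    refine ⟨v * (k ^ 2 - a + k * x * a), ?_⟩
    push_cast
    linear_combination (1 - k * x) * hv - v * (1 - k * x) * ha

theorem X_pow_succ_dvd_val_zpow_sub {R : Type*} [CommRing R] {n : ℕ} (hn : 0 < n)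
    {u : R⟦X⟧ˣ} (hu : (u : R⟦X⟧) = 1 - X ^ n) (g : ℤ) :
    X ^ (n + 1) ∣ ((u ^ g : R⟦X⟧ˣ) : R⟦X⟧) - (1 - (g : R⟦X⟧) * X ^ n) := by
  have h := sq_dvd_val_zpow_sub (x := -X ^ n) (by rw [hu, sub_eq_add_neg]) g
  rw [neg_sq, ← pow_mul, mul_neg, ← sub_eq_add_neg] at h
  exact (pow_dvd_pow X (by omega : n + 1 ≤ n * 2)).trans h

theorem X_pow_succ_dvd_sub_C_coeff_mul {R : Type*} [CommRing R] {n : ℕ} {φ : R⟦X⟧}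
    (h : X ^ n ∣ φ) : X ^ (n + 1) ∣ φ - C (coeff n φ) * X ^ n := by
  rw [X_pow_dvd_iff] at h ⊢
  intro m hm
  rw [map_sub, coeff_C_mul_X_pow]
  rcases (Nat.lt_succ_iff.mp hm).lt_or_eq with hlt | rfl
  · simp [h m hlt, hlt.ne]
  · simp

theorem X_pow_succ_dvd_sub_mul_zpow {N : ℕ} {h : ℤ⟦X⟧} {P u : ℤ⟦X⟧ˣ}
    (hu : (u : ℤ⟦X⟧) = 1 - X ^ (N + 1)) (hh : constantCoeff h = 1)
    (hP : X ^ (N + 1) ∣ h - (P : ℤ⟦X⟧)) :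
    X ^ (N + 2) ∣ h - ((P * u ^ (-coeff (N + 1) (h - (P : ℤ⟦X⟧))) : ℤ⟦X⟧ˣ) : ℤ⟦X⟧) := by
  set c := coeff (N + 1) (h - (P : ℤ⟦X⟧))
  have hP1 : X ∣ (P : ℤ⟦X⟧) - 1 := by
    have hX : X ∣ h - (P : ℤ⟦X⟧) := (dvd_pow_self X N.add_one_ne_zero).trans hP
    have hh1 : X ∣ h - 1 := X_dvd_iff.mpr (by simp [hh])
    simpa using hh1.sub hX
  obtain ⟨a, ha⟩ := X_pow_succ_dvd_sub_C_coeff_mul hP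
  obtain ⟨b, hb⟩ := X_pow_succ_dvd_val_zpow_sub N.add_one_pos hu (-c)
  obtain ⟨d, hd⟩ := hP1
  refine ⟨a - (P : ℤ⟦X⟧) * b - C c * d, ?_⟩
  have hCc : ((-c : ℤ) : ℤ⟦X⟧) = -C c := by simp
  rw [hCc] at hb
  rw [Units.val_mul]
  linear_combination ha - (P : ℤ⟦X⟧) * hb - C c * X ^ (N + 1) * hd

noncomputable def greedyProduct (U : ℕ → ℤ⟦X⟧ˣ) (h : ℤ⟦X⟧) : ℕ → ℤ⟦X⟧ˣ
  | 0 => 1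
  | N + 1 => greedyProduct U h N * U (N + 1) ^ (-coeff (N + 1) (h - (greedyProduct U h N : ℤ⟦X⟧)))

noncomputable def greedyExponent (U : ℕ → ℤ⟦X⟧ˣ) (h : ℤ⟦X⟧) (n : ℕ) : ℤ :=
  -coeff n (h - (greedyProduct U h (n - 1) : ℤ⟦X⟧))

theorem prod_Icc_zpow_greedyExponent (U : ℕ → ℤ⟦X⟧ˣ) (h : ℤ⟦X⟧) (N : ℕ) :
    ∏ n ∈ Icc 1 N, U n ^ greedyExponent U h n = greedyProduct U h N := by
  induction N with
  | zero => rfl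
  | succ N ih => rw [prod_Icc_succ_top (Nat.le_add_left 1 N), ih]; rfl

theorem X_pow_succ_dvd_sub_greedyProduct {U : ℕ → ℤ⟦X⟧ˣ}
    (hU : ∀ n, 0 < n → (U n : ℤ⟦X⟧) = 1 - X ^ n) {h : ℤ⟦X⟧} (hh : constantCoeff h = 1)
    (N : ℕ) : X ^ (N + 1) ∣ h - (greedyProduct U h N : ℤ⟦X⟧) := by
  induction N with
  | zero => exact (pow_one (X : ℤ⟦X⟧)).symm ▸ X_dvd_iff.mpr (by simp [greedyProduct, hh])
  | succ N ih => exact X_pow_succ_dvd_sub_mul_zpow (hU _ N.add_one_pos) hh ih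

/-- **Existence of the product formula.**
Every `f ∈ ℤ⟦q⟧` with zero constant term and coefficient of `q` equal to `1` can be written as
`f = q·∏_{n=1}^∞ (1−q^n)^{g_n}` for a sequence of integers `(g_n)_{n≥1}`, the infinite product
being understood `q`-adically: for every `N ≥ 1`,
`f ≡ q·∏_{n=1}^N (1−q^n)^{g_n} (mod q^{N+2})`.
Here `U n` is the power series `1 − q^n` (`n ≥ 1`) regarded as a unit of `ℤ⟦q⟧`, so that the
integer power `(1−q^n)^{g_n}` makes sense for `g_n ∈ ℤ`. -/
theorem product_formula_exists
    (U : ℕ → (PowerSeries ℤ)ˣ)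
    (hU : ∀ n : ℕ, 0 < n → (U n : PowerSeries ℤ) = 1 - X ^ n)
    (f : PowerSeries ℤ)
    (h0 : PowerSeries.coeff 0 f = 0) (h1 : PowerSeries.coeff 1 f = 1) :
    ∃ g : ℕ → ℤ, ∀ N : ℕ, 1 ≤ N →
      (X : PowerSeries ℤ) ^ (N + 2) ∣
        f - X * (↑(∏ n ∈ Finset.Icc 1 N, U n ^ g n) : PowerSeries ℤ) := by
  obtain ⟨h, rfl⟩ := X_dvd_iff.mpr (by simpa using h0)
  have hh : constantCoeff h = 1 := by simpa [coeff_succ_X_mul] using h1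
  refine ⟨greedyExponent U h, fun N _ => ?_⟩
  rw [prod_Icc_zpow_greedyExponent, ← mul_sub, pow_succ' X (N + 1)]
  exact mul_dvd_mul_left X (X_pow_succ_dvd_sub_greedyProduct hU hh N)
end

section
/- The integer exponents in the product representation of a normalized power series are unique: if (g_n)_{n≥1} and (h_n)_{n≥1} are sequences of integers with q·∏_{n=1}^∞ (1−q^n)^{g_n} = q·∏_{n=1}^∞ (1−q^n)^{h_n} as formal power series over ℤ (both products understood q-adically), then g_n = h_n for all n ≥ 1. -/
open PowerSeries Finset

/-!
Modulo `X^(n+1)` the unit `1 - X^n` behaves like `1 + ε` with `ε² = 0`, so its `c`-th power is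
`1 - c X^n` for every integer `c`; hence the `n`-th coefficient of `(1 - X^n)^c` is `-c`.
If the two products agree up to degree `N + 1`, cancelling `X` and the common factors with index
`< n` (equal by strong induction) leaves `(1 - X^n)^{g_n} ≡ (1 - X^n)^{h_n} (mod X^(n+1))`,
and comparing `n`-th coefficients gives `g_n = h_n`.
-/

section SquareZero

variable {R : Type*} [CommRing R] {d ε : R}

theorem dvd_pow_sub_one_add_mul_of_dvd_sq (hε : d ∣ ε ^ 2) {f : R} (hf : d ∣ f - (1 + ε)) :
    ∀ k : ℕ, d ∣ f ^ k - (1 + k * ε)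
  | 0 => by simp
  | k + 1 => by
    have hk := dvd_pow_sub_one_add_mul_of_dvd_sq hε hf k
    have key : f ^ (k + 1) - (1 + ↑(k + 1) * ε) =
        f * (f ^ k - (1 + k * ε)) + (1 + k * ε) * (f - (1 + ε)) + k * ε ^ 2 := by
      push_cast; ring
    rw [key]
    exact ((hk.mul_left f).add (hf.mul_left _)).add (hε.mul_left _)

theorem dvd_val_inv_sub_one_sub_of_dvd_sq (hε : d ∣ ε ^ 2) {u : Rˣ} (hu : d ∣ ↑u - (1 + ε)) :
    d ∣ ↑u⁻¹ - (1 - ε) := by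
  -- `u⁻¹ - (1 - ε) = u⁻¹ (1 - u (1 - ε))` and `u (1 - ε) ≡ (1 + ε)(1 - ε) = 1 - ε²`.
  have key : (↑u⁻¹ - (1 - ε) : R) = ↑u⁻¹ * (ε ^ 2 - (↑u - (1 + ε)) * (1 - ε)) := by
    linear_combination (1 - ε) * u.inv_mul
  rw [key]
  exact (hε.sub (hu.mul_right _)).mul_left _

theorem dvd_val_zpow_sub_one_add_mul_of_dvd_sq (hε : d ∣ ε ^ 2) {u : Rˣ}
    (hu : d ∣ ↑u - (1 + ε)) : ∀ c : ℤ, d ∣ ↑(u ^ c) - (1 + c * ε)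
  | (k : ℕ) => by
    simpa using dvd_pow_sub_one_add_mul_of_dvd_sq hε hu k
  | .negSucc k => by
    have hinv : d ∣ ↑u⁻¹ - (1 + -ε) := by
      simpa [← sub_eq_add_neg] using dvd_val_inv_sub_one_sub_of_dvd_sq hε hu
    have := dvd_pow_sub_one_add_mul_of_dvd_sq (by simpa using hε) hinv (k + 1)
    rw [zpow_negSucc, ← inv_pow, Units.val_pow_eq_pow_val, Int.negSucc_eq]
    convert this using 2
    push_cast; ring

end SquareZero

theorem coeff_val_zpow_of_val_eq_one_sub_X_pow {n : ℕ} (hn : 1 ≤ n) {u : (PowerSeries ℤ)ˣ}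
    (hu : (u : PowerSeries ℤ) = 1 - X ^ n) (c : ℤ) :
    coeff n (↑(u ^ c) : PowerSeries ℤ) = -c := by
  have hsq : (X : PowerSeries ℤ) ^ (n + 1) ∣ (-X ^ n) ^ 2 := by
    rw [neg_sq, ← pow_mul]
    exact pow_dvd_pow _ (by omega)
  have hdvd := dvd_val_zpow_sub_one_add_mul_of_dvd_sq hsq
    (by rw [hu, ← sub_eq_add_neg, sub_self]; exact dvd_zero _) c
  have hcoeff := X_pow_dvd_iff.mp hdvd n n.lt_succ_self
  rw [map_sub, sub_eq_zero, ← map_intCast (C (R := ℤ)) c] at hcoeff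
  rw [hcoeff, mul_neg, ← sub_eq_add_neg, map_sub, coeff_C_mul, coeff_X_pow_self, coeff_one,
    if_neg (by omega)]
  simp

theorem zpow_injective_mod_X_pow_succ {n : ℕ} (hn : 1 ≤ n) {u : (PowerSeries ℤ)ˣ}
    (hu : (u : PowerSeries ℤ) = 1 - X ^ n) {c c' : ℤ}
    (h : (X : PowerSeries ℤ) ^ (n + 1) ∣ ↑(u ^ c) - ↑(u ^ c')) : c = c' := by
  have := X_pow_dvd_iff.mp h n n.lt_succ_self
  rw [map_sub, sub_eq_zero, coeff_val_zpow_of_val_eq_one_sub_X_pow hn hu,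
    coeff_val_zpow_of_val_eq_one_sub_X_pow hn hu, neg_inj] at this
  exact this

theorem Units.dvd_val_mul_sub_val_mul_iff {R : Type*} [CommRing R] {a : R} (w u v : Rˣ) :
    a ∣ ↑(w * u) - ↑(w * v) ↔ a ∣ ↑u - ↑v := by
  rw [Units.val_mul, Units.val_mul, ← mul_sub, Units.dvd_mul_left]

/-- **Uniqueness of the exponents in the product formula.**
If two sequences of integers `(g_n)_{n≥1}` and `(h_n)_{n≥1}` satisfy
`q·∏_{n=1}^∞ (1−q^n)^{g_n} = q·∏_{n=1}^∞ (1−q^n)^{h_n}` in `ℤ⟦q⟧` — i.e. there is a single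
power series `F` which is `q`-adically the value of both infinite products, meaning
`F ≡ q·∏_{n=1}^N (1−q^n)^{g_n} (mod q^{N+2})` and
`F ≡ q·∏_{n=1}^N (1−q^n)^{h_n} (mod q^{N+2})` for every `N ≥ 1` — then `g_n = h_n` for all
`n ≥ 1`. Here `U n` is `1 − q^n` (`n ≥ 1`) regarded as a unit of `ℤ⟦q⟧`. -/
theorem product_formula_exponents_unique
    (U : ℕ → (PowerSeries ℤ)ˣ)
    (hU : ∀ n : ℕ, 0 < n → (U n : PowerSeries ℤ) = 1 - X ^ n)
    (g h : ℕ → ℤ) (F : PowerSeries ℤ)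
    (hg : ∀ N : ℕ, 1 ≤ N →
      (X : PowerSeries ℤ) ^ (N + 2) ∣
        F - X * (↑(∏ n ∈ Finset.Icc 1 N, U n ^ g n) : PowerSeries ℤ))
    (hh : ∀ N : ℕ, 1 ≤ N →
      (X : PowerSeries ℤ) ^ (N + 2) ∣
        F - X * (↑(∏ n ∈ Finset.Icc 1 N, U n ^ h n) : PowerSeries ℤ)) :
    ∀ n : ℕ, 1 ≤ n → g n = h n := by
  have hprod : ∀ N, 1 ≤ N → (X : PowerSeries ℤ) ^ (N + 1) ∣
      ↑(∏ n ∈ Icc 1 N, U n ^ g n) - ↑(∏ n ∈ Icc 1 N, U n ^ h n) := by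
    intro N hN
    rw [← mul_dvd_mul_iff_left X_ne_zero, ← pow_succ', mul_sub]
    simpa using (hh N hN).sub (hg N hN)
  intro n
  induction n using Nat.strong_induction_on with
  | _ n ih =>
    intro hn
    obtain ⟨k, rfl⟩ : ∃ k, n = k + 1 := ⟨n - 1, by omega⟩
    have hlower : ∏ m ∈ Icc 1 k, U m ^ g m = ∏ m ∈ Icc 1 k, U m ^ h m :=
      prod_congr rfl fun m hm ↦ by rw [ih m (by grind) (mem_Icc.mp hm).1]
    have hlast := hprod (k + 1) hn
    rw [prod_Icc_succ_top hn, prod_Icc_succ_top hn, hlower,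
      Units.dvd_val_mul_sub_val_mul_iff] at hlast
    exact zpow_injective_mod_X_pow_succ hn (hU _ hn) hlast
end

section
/- Logarithmic derivative of the product formula: let (g_n)_{n≥1} be a sequence of integers and let f ∈ ℤ⟦q⟧ satisfy f = q·∏_{n=1}^∞ (1−q^n)^{g_n} (q-adically). Then q·f′ = f·(1 − ∑_{m=1}^∞ (∑_{d ∣ m} d·g_d) q^m), where f′ denotes the formal derivative of f and the inner sum runs over the positive divisors d of m. -/
/-!
Taking `X · (logarithmic derivative)` turns the product `X · ∏_{n ≤ N} (1 - X^n)^{g_n}` into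
`1 - ∑_{n ≤ N} g_n · n X^n / (1 - X^n)`, and `n X^n / (1 - X^n) = ∑_{k ≥ 1} n X^{nk}`, so
collecting the coefficient of `X^m` gives the divisor sum `∑_{d ∣ m} d g_d` as soon as `N ≥ m`.
Since `f` agrees with the truncated product modulo `X^{N+2}`, both sides of the identity agree
modulo `X^{N+1}` for every `N`.
-/

open PowerSeries Finset

namespace PowerSeries

variable {R : Type*} [CommRing R]

noncomputable def logDerivUnits : (R⟦X⟧)ˣ →* Multiplicative R⟦X⟧ where
  toFun u := .ofAdd (↑u⁻¹ * d⁄dX R u)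
  map_one' := by simp
  map_mul' u v := by
    simp only [mul_inv_rev, Units.val_mul, Derivation.leibniz, smul_eq_mul, ← ofAdd_add]
    congr 1
    linear_combination
      (↑u⁻¹ * d⁄dX R ↑u) * v.inv_mul + (↑v⁻¹ * d⁄dX R ↑v) * u.inv_mul

lemma toAdd_logDerivUnits (u : (R⟦X⟧)ˣ) :
    (logDerivUnits u).toAdd = ↑u⁻¹ * d⁄dX R u := rfl

lemma derivative_units (u : (R⟦X⟧)ˣ) :
    d⁄dX R (u : R⟦X⟧) = (u : R⟦X⟧) * (logDerivUnits u).toAdd := by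
  rw [toAdd_logDerivUnits, Units.mul_inv_cancel_left]

lemma toAdd_logDerivUnits_prod_zpow {ι : Type*} (s : Finset ι) (u : ι → (R⟦X⟧)ˣ)
    (g : ι → ℤ) :
    (logDerivUnits (∏ i ∈ s, u i ^ g i)).toAdd =
      ∑ i ∈ s, g i • (logDerivUnits (u i)).toAdd := by
  simp only [map_prod, map_zpow, toAdd_prod, toAdd_zpow]

variable (R) in
/-- `∑_{k ≥ 1} n X^{nk}`, the expansion of `n X^n / (1 - X^n)`. -/
noncomputable def lambertTerm (n : ℕ) : R⟦X⟧ :=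
  mk fun m => if n ∈ m.divisors then (n : R) else 0

lemma one_sub_X_pow_mul_lambertTerm {n : ℕ} (hn : 0 < n) :
    (1 - X ^ n) * lambertTerm R n = n • X ^ n := by
  ext m
  rw [sub_mul, one_mul, map_sub, coeff_X_pow_mul', map_nsmul, coeff_X_pow]
  simp only [lambertTerm, coeff_mk, Nat.mem_divisors]
  rcases lt_trichotomy m n with hmn | rfl | hmn
  · have hndvd : ¬(n ∣ m ∧ m ≠ 0) := fun ⟨hd, hm⟩ =>
      hmn.not_ge (Nat.le_of_dvd (by omega) hd)
    simp [hndvd, hmn.not_ge, hmn.ne]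
  · simp [hn.ne']
  · have hdvd : n ∣ m - n ↔ n ∣ m := Nat.dvd_sub_iff_left hmn.le dvd_rfl
    simp [hmn.le, hmn.ne', hdvd, Nat.sub_ne_zero_of_lt hmn, show m ≠ 0 by omega]

lemma X_mul_logDerivUnits_of_eq_one_sub_X_pow {u : (R⟦X⟧)ˣ} {n : ℕ} (hn : 0 < n)
    (hu : (u : R⟦X⟧) = 1 - X ^ n) : X * (logDerivUnits u).toAdd = -lambertTerm R n := by
  have hXu : X * d⁄dX R (u : R⟦X⟧) = -((u : R⟦X⟧) * lambertTerm R n) := by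
    rw [hu, one_sub_X_pow_mul_lambertTerm hn, map_sub, Derivation.leibniz_pow, derivative_X,
      Derivation.map_one_eq_zero, nsmul_eq_mul, nsmul_eq_mul, smul_eq_mul, mul_one, zero_sub,
      mul_neg, mul_comm X, mul_assoc, ← pow_succ, Nat.sub_add_cancel hn]
  rw [toAdd_logDerivUnits, mul_left_comm, hXu, mul_neg, Units.inv_mul_cancel_left]

lemma X_pow_succ_dvd_divisorSum_sub_sum_lambertTerm (g : ℕ → R) (N : ℕ) :
    X ^ (N + 1) ∣ (mk fun m : ℕ => ∑ d ∈ m.divisors, (d : R) * g d) -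
      ∑ n ∈ Icc 1 N, g n • lambertTerm R n := by
  refine X_pow_dvd_iff.mpr fun m hm => ?_
  rw [map_sub, coeff_mk, map_sum, sub_eq_zero]
  have hsub : m.divisors ⊆ Icc 1 N := fun d hd =>
    mem_Icc.mpr ⟨Nat.pos_of_mem_divisors hd, (Nat.divisor_le hd).trans (by omega)⟩
  rw [← sum_subset hsub fun d _ hd => by
    rw [coeff_smul, lambertTerm, coeff_mk, if_neg hd, smul_zero]]
  refine sum_congr rfl fun d hd => ?_
  rw [coeff_smul, lambertTerm, coeff_mk, if_pos hd, smul_eq_mul, mul_comm]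

lemma X_pow_dvd_X_mul_derivative {k : ℕ} {h : R⟦X⟧} (hk : X ^ k ∣ h) :
    X ^ k ∣ X * d⁄dX R h := by
  obtain ⟨c, rfl⟩ := hk
  cases k with
  | zero => exact one_dvd _
  | succ k =>
    refine ⟨(k + 1 : R⟦X⟧) * c + X * d⁄dX R c, ?_⟩
    rw [Derivation.leibniz, Derivation.leibniz_pow, derivative_X]
    simp only [smul_eq_mul, nsmul_eq_mul, Nat.add_sub_cancel, mul_one]
    push_cast
    ring

lemma X_pow_dvd_X_mul_derivative_sub {k : ℕ} {f : R⟦X⟧} (u : (R⟦X⟧)ˣ)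
    (hk : X ^ k ∣ f - X * (u : R⟦X⟧)) :
    X ^ k ∣ X * d⁄dX R f - f * (1 + X * (logDerivUnits u).toAdd) := by
  -- because `X (X u)' = X u (1 + X u'/u)`
  have key : X * d⁄dX R f - f * (1 + X * (logDerivUnits u).toAdd) =
      X * d⁄dX R (f - X * (u : R⟦X⟧)) -
        (f - X * (u : R⟦X⟧)) * (1 + X * (logDerivUnits u).toAdd) := by
    rw [map_sub, Derivation.leibniz, derivative_X, derivative_units]
    simp only [smul_eq_mul]
    ring
  rw [key]
  exact dvd_sub (X_pow_dvd_X_mul_derivative hk) (dvd_mul_of_dvd_left hk _)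

end PowerSeries

/-- **Logarithmic derivative of the product formula.**
Let `(g_n)_{n≥1}` be integers and let `f ∈ ℤ⟦q⟧` satisfy `f = q·∏_{n=1}^∞ (1−q^n)^{g_n}`
`q`-adically, i.e. `f ≡ q·∏_{n=1}^N (1−q^n)^{g_n} (mod q^{N+2})` for every `N ≥ 1`.
Then `q·f′ = f·(1 − ∑_{m=1}^∞ (∑_{d ∣ m} d·g_d) q^m)`, where `f′` is the formal derivative
and the inner sum runs over the positive divisors `d` of `m`. This is the formal-power-series
form of `q(∂f/∂q)/f = 1 − ∑_{n≥1} g_n·n·q^n/(1−q^n)`. Here `U n` is `1 − q^n` (`n ≥ 1`)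
regarded as a unit of `ℤ⟦q⟧`. -/
theorem log_derivative_of_product_formula
    (U : ℕ → (PowerSeries ℤ)ˣ)
    (hU : ∀ n : ℕ, 0 < n → (U n : PowerSeries ℤ) = 1 - X ^ n)
    (g : ℕ → ℤ) (f : PowerSeries ℤ)
    (hf : ∀ N : ℕ, 1 ≤ N →
      (X : PowerSeries ℤ) ^ (N + 2) ∣
        f - X * (↑(∏ n ∈ Finset.Icc 1 N, U n ^ g n) : PowerSeries ℤ)) :
    X * d⁄dX ℤ f =
      f * (1 - PowerSeries.mk fun m : ℕ => ∑ d ∈ m.divisors, (d : ℤ) * g d) := by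
  rw [← sub_eq_zero]
  ext m
  set S : PowerSeries ℤ := mk fun m : ℕ => ∑ d ∈ m.divisors, (d : ℤ) * g d
  set P := ∏ n ∈ Icc 1 (m + 1), U n ^ g n
  have hP : X * (logDerivUnits P).toAdd = -∑ n ∈ Icc 1 (m + 1), g n • lambertTerm ℤ n := by
    rw [toAdd_logDerivUnits_prod_zpow, mul_sum, ← sum_neg_distrib]
    refine sum_congr rfl fun n hn => ?_
    have hn0 : 0 < n := (mem_Icc.mp hn).1
    rw [mul_smul_comm, X_mul_logDerivUnits_of_eq_one_sub_X_pow hn0 (hU n hn0), smul_neg]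
  have hfP : X ^ (m + 2) ∣ f - X * (P : ℤ⟦X⟧) :=
    (pow_dvd_pow X (by omega)).trans (hf (m + 1) (by omega))
  have key : X * d⁄dX ℤ f - f * (1 - S) =
      (X * d⁄dX ℤ f - f * (1 + X * (logDerivUnits P).toAdd)) +
        f * (S - ∑ n ∈ Icc 1 (m + 1), g n • lambertTerm ℤ n) := by
    rw [hP]; ring
  have hdvd : X ^ (m + 2) ∣ X * d⁄dX ℤ f - f * (1 - S) := key ▸ dvd_add
    (X_pow_dvd_X_mul_derivative_sub P hfP)
    (dvd_mul_of_dvd_right (X_pow_succ_dvd_divisorSum_sub_sum_lambertTerm g (m + 1)) f)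
  simpa using X_pow_dvd_iff.mp hdvd m (by omega)
end
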